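/- Let T > 0 and let u, b : ℝ³ × [0,T] → ℝ³ be smooth, bounded with all derivatives, and divergence-free in x for each t. Set ω := curl_x u and j := curl_x b, and assume the current equation holds pointwise on ℝ³ × (0,T): ∂ₜj − Δj = −(u·∇)j + (j·∇)u + (b·∇)ω − (ω·∇)b + 2 ∑_{l=1}^3 ∇b_l × ∇u_l. Let φ(x,t) = η(t)ψ(x), where ψ : ℝ³ → [0,1] is smooth and compactly supported and η : [0,T] → [0,1] is smooth with η ≡ 0 on [0, T/3] and η ≡ 1 on [2T/3, T]. Then for every t ∈ [2T/3, T]: ∫₀^t ∫_{ℝ³} (1/2)‖j‖² (u·∇φ) dx ds = ∫_{ℝ³} (1/2)‖j(x,t)‖² ψ(x) dx + ∫₀^t ∫_{ℝ³} ‖∇j‖² φ dx ds − ∫₀^t ∫_{ℝ³} (1/2)‖j‖² (∂ₛφ + Δφ) dx ds − ∫₀^t ∫_{ℝ³} ((j·∇)u)·(φj) dx ds − ∫₀^t ∫_{ℝ³} ((b·∇)ω)·(φj) dx ds + ∫₀^t ∫_{ℝ³} ((ω·∇)b)·(φj) dx ds + ∫₀^t ∫_{ℝ³} ( 2 ∑_{l=1}^3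 ∇u_l × ∇b_l )·(φj) dx ds. -/

import Mathlib

open MeasureTheory

noncomputable section

/-- The partial derivative `∂ᵢ f` of a scalar field on `ℝ³`. -/
def pd (i : Fin 3) (f : (Fin 3 → ℝ) → ℝ) : (Fin 3 → ℝ) → ℝ :=
  fun x => fderiv ℝ f x (Pi.single i 1)

/-- The curl `∇ × F` of a vector field on `ℝ³`. -/
def curl3 (F : (Fin 3 → ℝ) → (Fin 3 → ℝ)) (x : Fin 3 → ℝ) : Fin 3 → ℝ :=
  ![pd 1 (fun z => F z 2) x - pd 2 (fun z => F z 1) x,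
    pd 2 (fun z => F z 0) x - pd 0 (fun z => F z 2) x,
    pd 0 (fun z => F z 1) x - pd 1 (fun z => F z 0) x]

/-- The advective derivative `(a·∇)c`, with components `∑ⱼ aⱼ ∂ⱼcᵢ`. -/
def adv (a c : (Fin 3 → ℝ) → (Fin 3 → ℝ)) (x : Fin 3 → ℝ) : Fin 3 → ℝ :=
  fun i => ∑ j, a x j * pd j (fun z => c z i) x

/-- The divergence `∑ᵢ ∂ᵢFᵢ` of a vector field on `ℝ³`. -/
def div3 (F : (Fin 3 → ℝ) → (Fin 3 → ℝ)) (x : Fin 3 → ℝ) : ℝ :=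
  ∑ i, pd i (fun z => F z i) x

/-- The cross product on `ℝ³`. -/
def cross3 (a b : Fin 3 → ℝ) : Fin 3 → ℝ :=
  ![a 1 * b 2 - a 2 * b 1, a 2 * b 0 - a 0 * b 2, a 0 * b 1 - a 1 * b 0]

/-!
Write `E(s) = ∫ ½|j|² η(s) ψ` for the localized current enstrophy. Since `j` is smooth and `ψ`
has compact support, `E` can be differentiated under the integral sign, and the fundamental
theorem of calculus gives `E(t) - E(0) = ∫₀ᵗ ∫ ∂ₛ(½|j|² η ψ)`. Pointwise, `∂ₛ(½|j|²) = j·∂ₛj`,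
and the current equation replaces `∂ₛj` by `Δj` plus the source terms. Two integrations by parts
finish the proof:
`ψ j·Δj = div(ψ (j·∂ₖj)ₖ - ½|j|²∇ψ) - ψ|∇j|² + ½|j|²Δψ`, and, because `div u = 0`,
`ψ j·(u·∇)j = div(½|j|²ψ u) - ½|j|² u·∇ψ`.
The divergences integrate to zero, and what remains is the integrand on the right-hand side.
Finally `E(0) = 0` because `η(0) = 0`, and `E(t) = ∫ ½|j(t)|² ψ` because `η(t) = 1`.
-/

local notation "ℝ³" => Fin 3 → ℝ

section PartialDerivative

variable {f g : ℝ³ → ℝ} {x : ℝ³}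

theorem contDiff_pd {m n : WithTop ℕ∞} (hf : ContDiff ℝ n f) (hmn : m + 1 ≤ n) (i : Fin 3) :
    ContDiff ℝ m (pd i f) :=
  (hf.fderiv_right hmn).clm_apply contDiff_const

theorem pd_const (c : ℝ) (i : Fin 3) : pd i (fun _ => c) x = 0 := by
  simp [pd]

theorem pd_sub (hf : DifferentiableAt ℝ f x) (hg : DifferentiableAt ℝ g x) (i : Fin 3) :
    pd i (fun z => f z - g z) x = pd i f x - pd i g x := by
  simp [pd, fderiv_fun_sub hf hg]

theorem pd_mul (hf : DifferentiableAt ℝ f x) (hg : DifferentiableAt ℝ g x) (i : Fin 3) :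
    pd i (fun z => f z * g z) x = pd i f x * g x + f x * pd i g x := by
  simp [pd, fderiv_fun_mul hf hg]
  ring

theorem pd_const_mul (hf : DifferentiableAt ℝ f x) (c : ℝ) (i : Fin 3) :
    pd i (fun z => c * f z) x = c * pd i f x := by
  simp [pd, fderiv_const_mul hf c]

theorem pd_sq (hf : DifferentiableAt ℝ f x) (i : Fin 3) :
    pd i (fun z => f z ^ 2) x = 2 * f x * pd i f x := by
  simp [pd, fderiv_fun_pow 2 hf]

theorem pd_sum {ι : Type*} {s : Finset ι} {f : ι → ℝ³ → ℝ}
    (hf : ∀ k ∈ s, DifferentiableAt ℝ (f k) x) (i : Fin 3) :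
    pd i (fun z => ∑ k ∈ s, f k z) x = ∑ k ∈ s, pd i (f k) x := by
  simp [pd, fderiv_fun_sum hf]

theorem pd_eq_zero_of_notMem_tsupport (hx : x ∉ tsupport f) (i : Fin 3) : pd i f x = 0 := by
  simp [pd, fderiv_of_notMem_tsupport ℝ hx]

theorem tsupport_pd_subset (i : Fin 3) : tsupport (pd i f) ⊆ tsupport f :=
  tsupport_fderiv_apply_subset ℝ _

theorem HasCompactSupport.pd (hg : HasCompactSupport g) (i : Fin 3) :
    HasCompactSupport (pd i g) :=
  hg.fderiv_apply ℝ _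

theorem integral_pd_eq_zero (hg : ContDiff ℝ 1 g) (hgc : HasCompactSupport g) (i : Fin 3) :
    ∫ x, pd i g x = 0 := by
  have hdg : Continuous (pd i g) := (contDiff_pd (m := 0) hg (by norm_num) i).continuous
  have h := integral_mul_fderiv_eq_neg_fderiv_mul_of_integrable (μ := volume)
    (v := Pi.single i 1) (f := fun _ => (1 : ℝ)) (g := g) (by simp)
    (by simp only [one_mul]; exact hdg.integrable_of_hasCompactSupport (hgc.pd i))
    (by simp only [one_mul]; exact hg.continuous.integrable_of_hasCompactSupport hgc)
    (fun _ _ => differentiableAt_const _) (fun x _ => hg.differentiable one_ne_zero x)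
  simpa [pd] using h

end PartialDerivative

section Divergence

variable {F G W : ℝ³ → ℝ³} {x : ℝ³}

theorem div3_sub (hF : DifferentiableAt ℝ F x) (hG : DifferentiableAt ℝ G x) :
    div3 (fun z => F z - G z) x = div3 F x - div3 G x := by
  simp [div3, pd_sub (differentiableAt_pi.1 hF _) (differentiableAt_pi.1 hG _),
    Finset.sum_sub_distrib]

theorem div3_const_smul (hF : DifferentiableAt ℝ F x) (c : ℝ) :
    div3 (fun z => c • F z) x = c * div3 F x := by
  simp [div3, pd_const_mul (differentiableAt_pi.1 hF _), Finset.mul_sum]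

theorem integral_add_div3 (g : ℝ³ → ℝ) (hW : ContDiff ℝ 1 W) (hWc : HasCompactSupport W) :
    ∫ x, (g x + div3 W x) = ∫ x, g x := by
  have hWk : ∀ k, ContDiff ℝ 1 (fun z => W z k) := contDiff_pi.1 hW
  have hWkc : ∀ k, HasCompactSupport (fun z => W z k) := fun k =>
    show HasCompactSupport ((fun v : ℝ³ => v k) ∘ W) from hWc.comp_left rfl
  have hpd : ∀ k, Integrable (pd k (fun z => W z k)) := fun k =>
    (contDiff_pd (m := 0) (hWk k) (by norm_num) k).continuous.integrable_of_hasCompactSupport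
      ((hWkc k).pd k)
  have hdiv : Integrable (div3 W) := integrable_finsetSum _ fun k _ => hpd k
  by_cases hg : Integrable g
  · have hdiv0 : ∫ x, div3 W x = 0 := by
      simp only [div3]
      rw [integral_finsetSum _ fun k _ => hpd k]
      simp [integral_pd_eq_zero (hWk _) (hWkc _)]
    rw [integral_add hg hdiv, hdiv0, add_zero]
  -- Otherwise `g + div3 W` is not integrable either, and both integrals are the junk value `0`.
  · have hgW : ¬Integrable (fun x => g x + div3 W x) := fun h =>
      hg ((h.sub hdiv).congr (.of_forall fun x => by simp))
    rw [integral_undef hg, integral_undef hgW]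

theorem mul_sum_mul_laplacian_eq {ψ : ℝ³ → ℝ} (hF : ContDiff ℝ 2 F) (hψ : ContDiff ℝ 2 ψ)
    (x : ℝ³) :
    ψ x * ∑ i, F x i * ∑ k, pd k (pd k (fun z => F z i)) x
      = div3 (fun z k => ψ z * ∑ i, F z i * pd k (fun y => F y i) z
          - (1 / 2) * (∑ i, F z i ^ 2) * pd k ψ z) x
        - ψ x * ∑ i, ∑ k, pd k (fun z => F z i) x ^ 2
        + (1 / 2) * (∑ i, F x i ^ 2) * ∑ k, pd k (pd k ψ) x := by
  have hFi : ∀ i, ContDiff ℝ 2 (fun z => F z i) := contDiff_pi.1 hF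
  have hFi' : ∀ i, Differentiable ℝ (fun z => F z i) := fun i =>
    (hFi i).differentiable (by simp)
  have hdF : ∀ i k, Differentiable ℝ (pd k (fun z => F z i)) := fun i k =>
    (contDiff_pd (m := 1) (hFi i) (by norm_num) k).differentiable (by simp)
  have hψ' : Differentiable ℝ ψ := hψ.differentiable (by simp)
  have hdψ : ∀ k, Differentiable ℝ (pd k ψ) := fun k =>
    (contDiff_pd (m := 1) hψ (by norm_num) k).differentiable (by simp)
  simp (disch := fun_prop) only [div3, pd_sub, pd_mul, pd_sum, pd_const, pd_sq]
  simp only [Fin.sum_univ_three]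
  ring

theorem mul_sum_adv_mul_eq {ψ : ℝ³ → ℝ} (hG : DifferentiableAt ℝ G x)
    (hF : DifferentiableAt ℝ F x) (hψ : DifferentiableAt ℝ ψ x) :
    ψ x * ∑ i, adv G F x i * F x i
      = div3 (fun z => ((1 / 2) * (∑ i, F z i ^ 2) * ψ z) • G z) x
        - (1 / 2) * (∑ i, F x i ^ 2) * (∑ k, G x k * pd k ψ x + ψ x * div3 G x) := by
  have hGk : ∀ k, DifferentiableAt ℝ (fun z => G z k) x := differentiableAt_pi.1 hG
  have hFi : ∀ i, DifferentiableAt ℝ (fun z => F z i) x := differentiableAt_pi.1 hF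
  simp (disch := fun_prop) only [div3, adv, Pi.smul_apply, smul_eq_mul, pd_mul, pd_sum, pd_sq,
    pd_const]
  simp only [Fin.sum_univ_three]
  ring

end Divergence

section ContinuousSupportedIn

variable {X : Type*} [TopologicalSpace X]

def ContinuousSupportedIn (K : Set X) (F : X → ℝ → ℝ) : Prop :=
  Continuous (fun p : X × ℝ => F p.1 p.2) ∧ ∀ x ∉ K, ∀ s, F x s = 0

namespace ContinuousSupportedIn

variable {K : Set X} {F G G' : X → ℝ → ℝ}

theorem continuous_slice (hF : ContinuousSupportedIn K F) (s : ℝ) : Continuous (F · s) :=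
  hF.1.comp (continuous_id.prodMk continuous_const)

variable [MeasurableSpace X] {μ : Measure X}

theorem integral_eq_setIntegral (hF : ContinuousSupportedIn K F) :
    (fun s => ∫ x, F x s ∂μ) = fun s => ∫ x in K, F x s ∂μ :=
  funext fun s => (setIntegral_eq_integral_of_forall_compl_eq_zero fun x hx => hF.2 x hx s).symm

variable [OpensMeasurableSpace X] [IsLocallyFiniteMeasure μ]

theorem integrable [T2Space X] (hF : ContinuousSupportedIn K F) (hK : IsCompact K) (s : ℝ) :
    Integrable (F · s) μ :=
  ((hF.continuous_slice s).continuousOn.integrableOn_compact hK).integrable_of_forall_notMem_eq_zero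
    fun x hx => hF.2 x hx s

theorem continuous_integral (hF : ContinuousSupportedIn K F) (hK : IsCompact K) :
    Continuous fun s => ∫ x, F x s ∂μ := by
  rw [hF.integral_eq_setIntegral]
  exact continuous_parametric_integral_of_continuous (f := fun s x => F x s)
    (hF.1.comp continuous_swap) hK

theorem intervalIntegral_integral_add [T2Space X] (hF : ContinuousSupportedIn K F)
    (hG : ContinuousSupportedIn K G) (hK : IsCompact K) (a b : ℝ) :
    ∫ s in a..b, ∫ x, (F x s + G x s) ∂μ
      = (∫ s in a..b, ∫ x, F x s ∂μ) + ∫ s in a..b, ∫ x, G x s ∂μ := by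
  simp_rw [fun s => integral_add (hF.integrable (μ := μ) hK s) (hG.integrable hK s)]
  exact intervalIntegral.integral_add ((hF.continuous_integral hK).intervalIntegrable a b)
    ((hG.continuous_integral hK).intervalIntegrable a b)

theorem intervalIntegral_integral_sub [T2Space X] (hF : ContinuousSupportedIn K F)
    (hG : ContinuousSupportedIn K G) (hK : IsCompact K) (a b : ℝ) :
    ∫ s in a..b, ∫ x, (F x s - G x s) ∂μ
      = (∫ s in a..b, ∫ x, F x s ∂μ) - ∫ s in a..b, ∫ x, G x s ∂μ := by
  simp_rw [fun s => integral_sub (hF.integrable (μ := μ) hK s) (hG.integrable hK s)]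
  exact intervalIntegral.integral_sub ((hF.continuous_integral hK).intervalIntegrable a b)
    ((hG.continuous_integral hK).intervalIntegrable a b)

theorem hasDerivAt_integral [T2Space X] (hG : ContinuousSupportedIn K G)
    (hG' : ContinuousSupportedIn K G') (hK : IsCompact K)
    (hder : ∀ x s, HasDerivAt (G x) (G' x s) s) (s₀ : ℝ) :
    HasDerivAt (fun s => ∫ x, G x s ∂μ) (∫ x, G' x s₀ ∂μ) s₀ := by
  rw [hG.integral_eq_setIntegral, congrFun hG'.integral_eq_setIntegral s₀]
  obtain ⟨C, hC⟩ := (hK.prod (isCompact_closedBall s₀ 1)).exists_bound_of_continuousOn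
    hG'.1.continuousOn
  exact (hasDerivAt_integral_of_dominated_loc_of_deriv_le (μ := μ.restrict K)
    (F := fun s x => G x s) (F' := fun s x => G' x s) (bound := fun _ => C)
    (Metric.ball_mem_nhds s₀ one_pos)
    (.of_forall fun s => (hG.continuous_slice s).aestronglyMeasurable)
    (hG.integrable hK s₀).integrableOn (hG'.continuous_slice s₀).aestronglyMeasurable
    ((ae_restrict_iff' hK.measurableSet).2 <| .of_forall fun x hx s hs =>
      hC (x, s) ⟨hx, Metric.ball_subset_closedBall hs⟩)
    (integrableOn_const hK.measure_ne_top) (.of_forall fun x s _ => hder x s)).2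

end ContinuousSupportedIn

end ContinuousSupportedIn

section FundamentalTheorem

variable {E : Type*} [NormedAddCommGroup E] [NormedSpace ℝ E] {K : Set E} {G : E → ℝ → ℝ}

theorem continuousSupportedIn_deriv (hG : ContDiff ℝ 1 (fun p : E × ℝ => G p.1 p.2))
    (hGK : ∀ x ∉ K, ∀ s, G x s = 0) : ContinuousSupportedIn K fun x s => deriv (G x) s := by
  refine ⟨?_, fun x hx s => by simp [show G x = 0 from funext (hGK x hx)]⟩
  have h := ContDiff.fderiv (n := 0) (f := fun (p : E × ℝ) (r : ℝ) => G p.1 r) (g := Prod.snd)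
    (hG.comp ((contDiff_fst.comp contDiff_fst).prodMk contDiff_snd)) contDiff_snd (by norm_num)
  exact h.continuous.clm_apply continuous_const

theorem intervalIntegral_integral_deriv_eq_sub [MeasurableSpace E] [BorelSpace E]
    {μ : Measure E} [IsLocallyFiniteMeasure μ] (hK : IsCompact K)
    (hG : ContDiff ℝ 1 (fun p : E × ℝ => G p.1 p.2)) (hGK : ∀ x ∉ K, ∀ s, G x s = 0) (a b : ℝ) :
    ∫ s in a..b, ∫ x, deriv (G x) s ∂μ = ∫ x, G x b ∂μ - ∫ x, G x a ∂μ := by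
  have hG' := continuousSupportedIn_deriv hG hGK
  have hGx : ∀ x s, HasDerivAt (G x) (deriv (G x) s) s := fun x s =>
    ((hG.comp (contDiff_const.prodMk contDiff_id)).differentiable one_ne_zero s).hasDerivAt
  exact intervalIntegral.integral_eq_sub_of_hasDerivAt
    (fun s _ => ContinuousSupportedIn.hasDerivAt_integral ⟨hG.continuous, hGK⟩ hG' hK hGx s)
    ((hG'.continuous_integral hK).intervalIntegrable a b)

end FundamentalTheorem

section SpaceTime

variable {m n : WithTop ℕ∞} {F : ℝ³ → ℝ → ℝ³}

theorem ContDiff.pd_param (hF : ContDiff ℝ n (fun p : ℝ³ × ℝ => F p.1 p.2)) (hmn : m + 1 ≤ n)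
    (i k : Fin 3) : ContDiff ℝ m (fun p : ℝ³ × ℝ => pd k (fun z => F z p.2 i) p.1) := by
  have hFi : ContDiff ℝ n (fun q : (ℝ³ × ℝ) × ℝ³ => F q.2 q.1.2 i) :=
    contDiff_pi.1 (hF.comp (contDiff_snd.prodMk (contDiff_snd.comp contDiff_fst))) i
  exact (ContDiff.fderiv (f := fun (p : ℝ³ × ℝ) (z : ℝ³) => F z p.2 i) hFi contDiff_fst
    hmn).clm_apply contDiff_const

theorem ContDiff.curl3_param (hF : ContDiff ℝ n (fun p : ℝ³ × ℝ => F p.1 p.2))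
    (hmn : m + 1 ≤ n) : ContDiff ℝ m (fun p : ℝ³ × ℝ => curl3 (fun y => F y p.2) p.1) := by
  refine contDiff_pi.2 fun i => ?_
  have h := hF.pd_param hmn
  fin_cases i <;> exact (h _ _).sub (h _ _)

end SpaceTime

theorem cross3_anticomm (a b : ℝ³) : cross3 a b = -cross3 b a := by
  ext i; fin_cases i <;> simp [cross3] <;> ring

def currentSource (u b j ω : ℝ³ → ℝ → ℝ³) (t : ℝ) (x : ℝ³) : ℝ³ :=
  -adv (fun y => u y t) (fun y => j y t) x
    + adv (fun y => j y t) (fun y => u y t) x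
    + adv (fun y => b y t) (fun y => ω y t) x
    - adv (fun y => ω y t) (fun y => b y t) x
    + (2 : ℝ) • ∑ l : Fin 3,
        cross3 (fun k => pd k (fun z => b z t l) x) (fun k => pd k (fun z => u z t l) x)

def localizedEnstrophy (j : ℝ³ → ℝ → ℝ³) (ψ : ℝ³ → ℝ) (η : ℝ → ℝ) (x : ℝ³) (s : ℝ) : ℝ :=
  (1 / 2) * (∑ i, (j x s i) ^ 2) * (η s * ψ x)

def localizedEnstrophyRate (u b j ω : ℝ³ → ℝ → ℝ³) (ψ : ℝ³ → ℝ) (η : ℝ → ℝ) (x : ℝ³)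
    (s : ℝ) : ℝ :=
  (1 / 2) * (∑ i, (j x s i) ^ 2) * (η s * ∑ k, u x s k * pd k ψ x)
    - (∑ i, ∑ k, (pd k (fun z => j z s i) x) ^ 2) * (η s * ψ x)
    + (1 / 2) * (∑ i, (j x s i) ^ 2) * (deriv η s * ψ x + η s * ∑ k, pd k (pd k ψ) x)
    + ∑ i, adv (fun y => j y s) (fun y => u y s) x i * (η s * ψ x * j x s i)
    + ∑ i, adv (fun y => b y s) (fun y => ω y s) x i * (η s * ψ x * j x s i)
    - ∑ i, adv (fun y => ω y s) (fun y => b y s) x i * (η s * ψ x * j x s i)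
    - ∑ i, (2 * ∑ l : Fin 3, cross3 (fun k => pd k (fun z => u z s l) x)
        (fun k => pd k (fun z => b z s l) x) i) * (η s * ψ x * j x s i)

def enstrophyFlux (u j : ℝ³ → ℝ → ℝ³) (ψ : ℝ³ → ℝ) (s : ℝ) : ℝ³ → ℝ³ := fun z =>
  (fun k => ψ z * ∑ i, j z s i * pd k (fun y => j y s i) z
      - (1 / 2) * (∑ i, j z s i ^ 2) * pd k ψ z)
    - ((1 / 2) * (∑ i, j z s i ^ 2) * ψ z) • u z s

section CurrentEquation

variable {u b j ω : ℝ³ → ℝ → ℝ³} {ψ : ℝ³ → ℝ} {η : ℝ → ℝ} {s : ℝ} {x : ℝ³}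

theorem currentSource_apply (i : Fin 3) :
    currentSource u b j ω s x i = -adv (fun y => u y s) (fun y => j y s) x i
      + adv (fun y => j y s) (fun y => u y s) x i + adv (fun y => b y s) (fun y => ω y s) x i
      - adv (fun y => ω y s) (fun y => b y s) x i
      - 2 * ∑ l : Fin 3, cross3 (fun k => pd k (fun z => u z s l) x)
        (fun k => pd k (fun z => b z s l) x) i := by
  have hcross : ∀ l : Fin 3, cross3 (fun k => pd k (fun z => b z s l) x)
      (fun k => pd k (fun z => u z s l) x) i
        = -cross3 (fun k => pd k (fun z => u z s l) x) (fun k => pd k (fun z => b z s l) x) i :=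
    fun l => by rw [cross3_anticomm]; rfl
  simp only [currentSource, Pi.sub_apply, Pi.add_apply, Pi.neg_apply, Pi.smul_apply,
    Finset.sum_apply, smul_eq_mul, hcross, Finset.sum_neg_distrib]
  ring

theorem hasDerivAt_localizedEnstrophy (hjt : DifferentiableAt ℝ (fun r => j x r) s)
    (hη : DifferentiableAt ℝ η s) :
    HasDerivAt (localizedEnstrophy j ψ η x)
      ((∑ i, j x s i * deriv (fun r => j x r) s i) * (η s * ψ x)
        + (1 / 2) * (∑ i, j x s i ^ 2) * (deriv η s * ψ x)) s := by
  have hji : ∀ i, HasDerivAt (fun r => j x r i) (deriv (fun r => j x r) s i) s :=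
    hasDerivAt_pi.1 hjt.hasDerivAt
  refine (((HasDerivAt.fun_sum (u := Finset.univ) fun i _ => (hji i).fun_pow 2).const_mul
    (1 / 2 : ℝ)).fun_mul (hη.hasDerivAt.mul_const (ψ x))).congr_deriv ?_
  rw [Finset.mul_sum]
  congr 2
  exact Finset.sum_congr rfl fun i _ => by norm_num; ring

theorem contDiff_enstrophyFlux (hj : ContDiff ℝ 2 (fun z => j z s))
    (hu : ContDiff ℝ 1 (fun z => u z s)) (hψ : ContDiff ℝ 2 ψ) :
    ContDiff ℝ 1 (enstrophyFlux u j ψ s) := by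
  have hji : ∀ i, ContDiff ℝ 2 (fun z => j z s i) := contDiff_pi.1 hj
  have hj1 : ∀ i, ContDiff ℝ 1 (fun z => j z s i) := fun i => (hji i).of_le (by norm_num)
  have hdj : ∀ i k, ContDiff ℝ 1 (pd k (fun z => j z s i)) := fun i k =>
    contDiff_pd (hji i) (by norm_num) k
  have hψ1 : ContDiff ℝ 1 ψ := hψ.of_le (by norm_num)
  have hdψ : ∀ k, ContDiff ℝ 1 (pd k ψ) := fun k => contDiff_pd hψ (by norm_num) k
  exact (contDiff_pi.2 fun k => by fun_prop).sub (by fun_prop)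

theorem hasCompactSupport_enstrophyFlux (hψc : HasCompactSupport ψ) :
    HasCompactSupport (enstrophyFlux u j ψ s) :=
  HasCompactSupport.intro hψc fun z hz => by
    ext k
    simp [enstrophyFlux, image_eq_zero_of_notMem_tsupport hz, pd_eq_zero_of_notMem_tsupport hz]

theorem deriv_localizedEnstrophy_eq_add_div3 (hjt : DifferentiableAt ℝ (fun r => j x r) s)
    (hη : DifferentiableAt ℝ η s) (hj : ContDiff ℝ 2 (fun z => j z s))
    (hu : DifferentiableAt ℝ (fun z => u z s) x) (hψ : ContDiff ℝ 2 ψ)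
    (heq : deriv (fun r => j x r) s - (fun i => ∑ k, pd k (pd k (fun z => j z s i)) x)
      = currentSource u b j ω s x)
    (hdiv : div3 (fun y => u y s) x = 0) :
    deriv (localizedEnstrophy j ψ η x) s
      = localizedEnstrophyRate u b j ω ψ η x s + η s * div3 (enstrophyFlux u j ψ s) x := by
  have hji : ∀ i, ContDiff ℝ 2 (fun z => j z s i) := contDiff_pi.1 hj
  have hj1 : ∀ i, Differentiable ℝ (fun z => j z s i) := fun i =>
    (hji i).differentiable (by simp)
  have hdj : ∀ i k, Differentiable ℝ (pd k (fun z => j z s i)) := fun i k =>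
    (contDiff_pd (m := 1) (hji i) (by norm_num) k).differentiable (by simp)
  have hψ1 : Differentiable ℝ ψ := hψ.differentiable (by simp)
  have hdψ : ∀ k, Differentiable ℝ (pd k ψ) := fun k =>
    (contDiff_pd (m := 1) hψ (by norm_num) k).differentiable (by simp)
  have hjt' : ∀ i, deriv (fun r => j x r) s i
      = ∑ k, pd k (pd k fun z => j z s i) x + currentSource u b j ω s x i := fun i => by
    rw [← heq]; simp
  have hlap := mul_sum_mul_laplacian_eq hj hψ x
  have htr := mul_sum_adv_mul_eq hu (hj.differentiable two_ne_zero x) (hψ1 x)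
  rw [hdiv] at htr
  rw [(hasDerivAt_localizedEnstrophy hjt hη).deriv]
  unfold enstrophyFlux
  rw [div3_sub (by fun_prop) (by fun_prop)]
  simp only [hjt', currentSource_apply, localizedEnstrophyRate]
  simp only [Fin.sum_univ_three] at hlap htr ⊢
  linear_combination (η s) * hlap - (η s) * htr

theorem integral_deriv_localizedEnstrophy (hj : ContDiff ℝ 2 (fun p : ℝ³ × ℝ => j p.1 p.2))
    (hu : ContDiff ℝ 1 (fun p : ℝ³ × ℝ => u p.1 p.2)) (hη : Differentiable ℝ η)
    (hψ : ContDiff ℝ 2 ψ) (hψc : HasCompactSupport ψ)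
    (heq : ∀ x, deriv (fun r => j x r) s - (fun i => ∑ k, pd k (pd k (fun z => j z s i)) x)
      = currentSource u b j ω s x)
    (hdiv : ∀ x, div3 (fun y => u y s) x = 0) :
    ∫ x, deriv (localizedEnstrophy j ψ η x) s = ∫ x, localizedEnstrophyRate u b j ω ψ η x s := by
  have hjs : ContDiff ℝ 2 (fun z => j z s) := hj.comp (contDiff_id.prodMk contDiff_const)
  have hus : ContDiff ℝ 1 (fun z => u z s) := hu.comp (contDiff_id.prodMk contDiff_const)
  have hjt : ∀ x, DifferentiableAt ℝ (fun r => j x r) s := fun x =>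
    (hj.comp (contDiff_const.prodMk contDiff_id)).differentiable two_ne_zero s
  have hW := contDiff_enstrophyFlux hjs hus hψ
  have hderiv : ∀ x, deriv (localizedEnstrophy j ψ η x) s
      = localizedEnstrophyRate u b j ω ψ η x s + div3 (fun z => η s • enstrophyFlux u j ψ s z) x :=
    fun x => by
      rw [div3_const_smul (hW.differentiable one_ne_zero x)]
      exact deriv_localizedEnstrophy_eq_add_div3 (hjt x) (hη s) hjs
        (hus.differentiable one_ne_zero x) hψ (heq x) (hdiv x)
  rw [integral_congr_ae (.of_forall hderiv)]
  exact integral_add_div3 (fun x => localizedEnstrophyRate u b j ω ψ η x s)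
    (contDiff_const.fun_smul hW)
    ((hasCompactSupport_enstrophyFlux hψc).smul_left (f := fun _ => η s))

theorem integral_localizedEnstrophy_sub (hj : ContDiff ℝ 1 (fun p : ℝ³ × ℝ => j p.1 p.2))
    (hψ : ContDiff ℝ 1 ψ) (hψc : HasCompactSupport ψ) (hη : ContDiff ℝ 1 η) (a b : ℝ) :
    (∫ x, localizedEnstrophy j ψ η x b) - ∫ x, localizedEnstrophy j ψ η x a
      = ∫ s in a..b, ∫ x, deriv (localizedEnstrophy j ψ η x) s := by
  have hji : ∀ i, ContDiff ℝ 1 (fun p : ℝ³ × ℝ => j p.1 p.2 i) := contDiff_pi.1 hj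
  refine (intervalIntegral_integral_deriv_eq_sub (μ := volume) (G := localizedEnstrophy j ψ η)
    hψc ?_ (fun x hx s => ?_) a b).symm
  · unfold localizedEnstrophy; fun_prop
  · simp [localizedEnstrophy, image_eq_zero_of_notMem_tsupport hx]

theorem intervalIntegral_integral_localizedEnstrophyRate
    (hu : ContDiff ℝ 1 (fun p : ℝ³ × ℝ => u p.1 p.2))
    (hb : ContDiff ℝ 1 (fun p : ℝ³ × ℝ => b p.1 p.2))
    (hj : ContDiff ℝ 1 (fun p : ℝ³ × ℝ => j p.1 p.2))
    (hω : ContDiff ℝ 1 (fun p : ℝ³ × ℝ => ω p.1 p.2))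
    (hψ : ContDiff ℝ 2 ψ) (hψc : HasCompactSupport ψ) (hη : ContDiff ℝ 1 η) (t₀ t₁ : ℝ) :
    ∫ s in t₀..t₁, ∫ x, localizedEnstrophyRate u b j ω ψ η x s
      = (∫ s in t₀..t₁, ∫ x, (1 / 2) * (∑ i, (j x s i) ^ 2) * (η s * ∑ k, u x s k * pd k ψ x))
        - (∫ s in t₀..t₁, ∫ x, (∑ i, ∑ k, (pd k (fun z => j z s i) x) ^ 2) * (η s * ψ x))
        + (∫ s in t₀..t₁, ∫ x, (1 / 2) * (∑ i, (j x s i) ^ 2)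
            * (deriv η s * ψ x + η s * ∑ k, pd k (pd k ψ) x))
        + (∫ s in t₀..t₁, ∫ x,
            ∑ i, adv (fun y => j y s) (fun y => u y s) x i * (η s * ψ x * j x s i))
        + (∫ s in t₀..t₁, ∫ x,
            ∑ i, adv (fun y => b y s) (fun y => ω y s) x i * (η s * ψ x * j x s i))
        - (∫ s in t₀..t₁, ∫ x,
            ∑ i, adv (fun y => ω y s) (fun y => b y s) x i * (η s * ψ x * j x s i))
        - (∫ s in t₀..t₁, ∫ x, ∑ i, (2 * ∑ l : Fin 3,
            cross3 (fun k => pd k (fun z => u z s l) x) (fun k => pd k (fun z => b z s l) x) i)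
              * (η s * ψ x * j x s i)) := by
  have hK : IsCompact (tsupport ψ) := hψc
  have hcomp : ∀ {F : ℝ³ → ℝ → ℝ³}, ContDiff ℝ 1 (fun p : ℝ³ × ℝ => F p.1 p.2) →
      ∀ i, Continuous fun p : ℝ³ × ℝ => F p.1 p.2 i := fun hF i =>
    (continuous_apply i).comp hF.continuous
  have hpd : ∀ {F : ℝ³ → ℝ → ℝ³}, ContDiff ℝ 1 (fun p : ℝ³ × ℝ => F p.1 p.2) →
      ∀ i k, Continuous fun p : ℝ³ × ℝ => pd k (fun z => F z p.2 i) p.1 := fun hF i k =>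
    (hF.pd_param (m := 0) (by norm_num) i k).continuous
  have hu₀ := hcomp hu; have hb₀ := hcomp hb; have hj₀ := hcomp hj; have hω₀ := hcomp hω
  have hu₁ := hpd hu; have hb₁ := hpd hb; have hj₁ := hpd hj; have hω₁ := hpd hω
  have hη₀ : Continuous η := hη.continuous
  have hη₁ : Continuous (deriv η) := hη.continuous_deriv le_rfl
  have hψ₀ : Continuous ψ := hψ.continuous
  have hψ₁ : ∀ k, Continuous (pd k ψ) := fun k =>
    (contDiff_pd (m := 0) hψ (by norm_num) k).continuous
  have hψ₂ : ∀ k, Continuous (pd k (pd k ψ)) := fun k =>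
    (contDiff_pd (m := 0) (contDiff_pd (m := 1) hψ (by norm_num) k) (by norm_num) k).continuous
  have hψK₀ : ∀ x ∉ tsupport ψ, ψ x = 0 := fun x hx => image_eq_zero_of_notMem_tsupport hx
  have hψK₁ : ∀ x ∉ tsupport ψ, ∀ k, pd k ψ x = 0 := fun x hx =>
    pd_eq_zero_of_notMem_tsupport hx
  have hψK₂ : ∀ x ∉ tsupport ψ, ∀ k, pd k (pd k ψ) x = 0 := fun x hx k =>
    pd_eq_zero_of_notMem_tsupport (fun h => hx (tsupport_pd_subset k h)) k
  simp only [localizedEnstrophyRate]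
  -- the side goals `?_` are the `ContinuousSupportedIn` conditions of the partial sums
  rw [ContinuousSupportedIn.intervalIntegral_integral_sub ?_ ?_ hK,
    ContinuousSupportedIn.intervalIntegral_integral_sub ?_ ?_ hK,
    ContinuousSupportedIn.intervalIntegral_integral_add ?_ ?_ hK,
    ContinuousSupportedIn.intervalIntegral_integral_add ?_ ?_ hK,
    ContinuousSupportedIn.intervalIntegral_integral_add ?_ ?_ hK,
    ContinuousSupportedIn.intervalIntegral_integral_sub ?_ ?_ hK]
  all_goals
    refine ⟨by simp only [adv, cross3]; fun_prop, fun x hx s => ?_⟩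
    simp [hψK₀ x hx, hψK₁ x hx, hψK₂ x hx]

end CurrentEquation

theorem localized_magnetic_enstrophy_flux_identity_general
    (T : ℝ) (hT : 0 < T)
    (u b : (Fin 3 → ℝ) → ℝ → (Fin 3 → ℝ))
    (hu_smooth : ContDiff ℝ (⊤ : ℕ∞) (fun p : (Fin 3 → ℝ) × ℝ => u p.1 p.2))
    (hb_smooth : ContDiff ℝ (⊤ : ℕ∞) (fun p : (Fin 3 → ℝ) × ℝ => b p.1 p.2))
    (hu_div : ∀ t ∈ Set.Icc (0 : ℝ) T, ∀ x, div3 (fun y => u y t) x = 0)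
    (ω j : (Fin 3 → ℝ) → ℝ → (Fin 3 → ℝ))
    (hω : ∀ x t, ω x t = curl3 (fun y => u y t) x)
    (hj : ∀ x t, j x t = curl3 (fun y => b y t) x)
    -- the current equation, pointwise on ℝ³ × (0,T)
    (heq : ∀ (x : Fin 3 → ℝ), ∀ t ∈ Set.Ioo (0 : ℝ) T,
      deriv (fun s => j x s) t - (fun i => ∑ k, pd k (pd k (fun z => j z t i)) x)
        = -adv (fun y => u y t) (fun y => j y t) x
          + adv (fun y => j y t) (fun y => u y t) x
          + adv (fun y => b y t) (fun y => ω y t) x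
          - adv (fun y => ω y t) (fun y => b y t) x
          + (2 : ℝ) • ∑ l : Fin 3,
              cross3 (fun k => pd k (fun z => b z t l) x)
                (fun k => pd k (fun z => u z t l) x))
    (ψ : (Fin 3 → ℝ) → ℝ)
    (hψ_smooth : ContDiff ℝ (⊤ : ℕ∞) ψ) (hψ_supp : HasCompactSupport ψ)
    (η : ℝ → ℝ)
    (hη_smooth : ContDiff ℝ (⊤ : ℕ∞) η)
    (hη_zero : ∀ t ∈ Set.Icc (0 : ℝ) (T / 3), η t = 0)
    (hη_one : ∀ t ∈ Set.Icc (2 * T / 3) T, η t = 1) :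
    ∀ t ∈ Set.Icc (2 * T / 3) T,
      (∫ s in (0 : ℝ)..t, ∫ x : Fin 3 → ℝ,
          (1 / 2) * (∑ i, (j x s i) ^ 2) * (η s * ∑ k, u x s k * pd k ψ x))
        = (∫ x : Fin 3 → ℝ, (1 / 2) * (∑ i, (j x t i) ^ 2) * ψ x)
          + (∫ s in (0 : ℝ)..t, ∫ x : Fin 3 → ℝ,
              (∑ i, ∑ k, (pd k (fun z => j z s i) x) ^ 2) * (η s * ψ x))
          - (∫ s in (0 : ℝ)..t, ∫ x : Fin 3 → ℝ,
              (1 / 2) * (∑ i, (j x s i) ^ 2)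
                * (deriv η s * ψ x + η s * ∑ k, pd k (pd k ψ) x))
          - (∫ s in (0 : ℝ)..t, ∫ x : Fin 3 → ℝ,
              ∑ i, adv (fun y => j y s) (fun y => u y s) x i * (η s * ψ x * j x s i))
          - (∫ s in (0 : ℝ)..t, ∫ x : Fin 3 → ℝ,
              ∑ i, adv (fun y => b y s) (fun y => ω y s) x i * (η s * ψ x * j x s i))
          + (∫ s in (0 : ℝ)..t, ∫ x : Fin 3 → ℝ,
              ∑ i, adv (fun y => ω y s) (fun y => b y s) x i * (η s * ψ x * j x s i))
          + (∫ s in (0 : ℝ)..t, ∫ x : Fin 3 → ℝ,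
              ∑ i, (2 * ∑ l : Fin 3,
                  cross3 (fun k => pd k (fun z => u z s l) x)
                    (fun k => pd k (fun z => b z s l) x) i)
                * (η s * ψ x * j x s i)) := by
  intro t ht
  have ht₀ : 0 ≤ t := by linarith [ht.1]
  have h₁ : (1 : WithTop ℕ∞) ≤ (⊤ : ℕ∞) := by norm_cast
  have h₂ : (2 : WithTop ℕ∞) ≤ (⊤ : ℕ∞) := by norm_cast
  have htop : ((⊤ : ℕ∞) : WithTop ℕ∞) + 1 ≤ (⊤ : ℕ∞) := by norm_cast
  have hj_smooth : ContDiff ℝ (⊤ : ℕ∞) (fun p : (Fin 3 → ℝ) × ℝ => j p.1 p.2) := by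
    simpa only [hj] using hb_smooth.curl3_param htop
  have hω_smooth : ContDiff ℝ (⊤ : ℕ∞) (fun p : (Fin 3 → ℝ) × ℝ => ω p.1 p.2) := by
    simpa only [hω] using hu_smooth.curl3_param htop
  have hbal := integral_localizedEnstrophy_sub (hj_smooth.of_le h₁) (hψ_smooth.of_le h₁)
    hψ_supp (hη_smooth.of_le h₁) 0 t
  rw [intervalIntegral.integral_congr_Ioo_of_le ht₀ fun s hs =>
      integral_deriv_localizedEnstrophy (hj_smooth.of_le h₂) (hu_smooth.of_le h₁)
        (hη_smooth.differentiable (by simp)) (hψ_smooth.of_le h₂) hψ_supp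
        (fun x => heq x s ⟨hs.1, hs.2.trans_le ht.2⟩)
        (hu_div s ⟨hs.1.le, hs.2.le.trans ht.2⟩),
    intervalIntegral_integral_localizedEnstrophyRate (hu_smooth.of_le h₁) (hb_smooth.of_le h₁)
      (hj_smooth.of_le h₁) (hω_smooth.of_le h₁) (hψ_smooth.of_le h₂) hψ_supp
      (hη_smooth.of_le h₁)] at hbal
  simp only [localizedEnstrophy, hη_one t ht, hη_zero 0 ⟨le_rfl, by positivity⟩, zero_mul,
    mul_zero, integral_zero, one_mul, sub_zero] at hbal
  linarith

/-- the localized magnetic enstrophy flux identity (3.4).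
Multiplying the current equation by `φj`, with `φ(x,t) = η(t)ψ(x)`, and integrating by
parts in space and time expresses the localized magnetic enstrophy flux
`F^j(t) = ∫₀ᵗ∫ (1/2)|j|²(u·∇φ)` as the sum of the terminal localized current enstrophy,
the localized palenstrophy, the lower-order cut-off term, the current-stretching term,
the two coupling terms, and the term arising from `2∑ₗ ∇bₗ × ∇uₗ`. -/
theorem localized_magnetic_enstrophy_flux_identity
    (T : ℝ) (hT : 0 < T)
    (u b : (Fin 3 → ℝ) → ℝ → (Fin 3 → ℝ))
    (hu_smooth : ContDiff ℝ (⊤ : ℕ∞) (fun p : (Fin 3 → ℝ) × ℝ => u p.1 p.2))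
    (hb_smooth : ContDiff ℝ (⊤ : ℕ∞) (fun p : (Fin 3 → ℝ) × ℝ => b p.1 p.2))
    (hu_bdd : ∀ n : ℕ, ∃ C : ℝ, ∀ (x : Fin 3 → ℝ) (t : ℝ), t ∈ Set.Icc 0 T →
      ‖iteratedFDeriv ℝ n (fun p : (Fin 3 → ℝ) × ℝ => u p.1 p.2) (x, t)‖ ≤ C)
    (hb_bdd : ∀ n : ℕ, ∃ C : ℝ, ∀ (x : Fin 3 → ℝ) (t : ℝ), t ∈ Set.Icc 0 T →
      ‖iteratedFDeriv ℝ n (fun p : (Fin 3 → ℝ) × ℝ => b p.1 p.2) (x, t)‖ ≤ C)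
    (hu_div : ∀ t ∈ Set.Icc (0 : ℝ) T, ∀ x, div3 (fun y => u y t) x = 0)
    (hb_div : ∀ t ∈ Set.Icc (0 : ℝ) T, ∀ x, div3 (fun y => b y t) x = 0)
    (ω j : (Fin 3 → ℝ) → ℝ → (Fin 3 → ℝ))
    (hω : ∀ x t, ω x t = curl3 (fun y => u y t) x)
    (hj : ∀ x t, j x t = curl3 (fun y => b y t) x)
    -- the current equation, pointwise on ℝ³ × (0,T)
    (heq : ∀ (x : Fin 3 → ℝ), ∀ t ∈ Set.Ioo (0 : ℝ) T,
      deriv (fun s => j x s) t - (fun i => ∑ k, pd k (pd k (fun z => j z t i)) x)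
        = -adv (fun y => u y t) (fun y => j y t) x
          + adv (fun y => j y t) (fun y => u y t) x
          + adv (fun y => b y t) (fun y => ω y t) x
          - adv (fun y => ω y t) (fun y => b y t) x
          + (2 : ℝ) • ∑ l : Fin 3,
              cross3 (fun k => pd k (fun z => b z t l) x)
                (fun k => pd k (fun z => u z t l) x))
    (ψ : (Fin 3 → ℝ) → ℝ)
    (hψ_smooth : ContDiff ℝ (⊤ : ℕ∞) ψ) (hψ_supp : HasCompactSupport ψ)
    (hψ_range : ∀ x, ψ x ∈ Set.Icc (0 : ℝ) 1)
    (η : ℝ → ℝ)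
    (hη_smooth : ContDiff ℝ (⊤ : ℕ∞) η)
    (hη_range : ∀ t ∈ Set.Icc (0 : ℝ) T, η t ∈ Set.Icc (0 : ℝ) 1)
    (hη_zero : ∀ t ∈ Set.Icc (0 : ℝ) (T / 3), η t = 0)
    (hη_one : ∀ t ∈ Set.Icc (2 * T / 3) T, η t = 1) :
    ∀ t ∈ Set.Icc (2 * T / 3) T,
      (∫ s in (0 : ℝ)..t, ∫ x : Fin 3 → ℝ,
          (1 / 2) * (∑ i, (j x s i) ^ 2) * (η s * ∑ k, u x s k * pd k ψ x))
        = (∫ x : Fin 3 → ℝ, (1 / 2) * (∑ i, (j x t i) ^ 2) * ψ x)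
          + (∫ s in (0 : ℝ)..t, ∫ x : Fin 3 → ℝ,
              (∑ i, ∑ k, (pd k (fun z => j z s i) x) ^ 2) * (η s * ψ x))
          - (∫ s in (0 : ℝ)..t, ∫ x : Fin 3 → ℝ,
              (1 / 2) * (∑ i, (j x s i) ^ 2)
                * (deriv η s * ψ x + η s * ∑ k, pd k (pd k ψ) x))
          - (∫ s in (0 : ℝ)..t, ∫ x : Fin 3 → ℝ,
              ∑ i, adv (fun y => j y s) (fun y => u y s) x i * (η s * ψ x * j x s i))
          - (∫ s in (0 : ℝ)..t, ∫ x : Fin 3 → ℝ,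
              ∑ i, adv (fun y => b y s) (fun y => ω y s) x i * (η s * ψ x * j x s i))
          + (∫ s in (0 : ℝ)..t, ∫ x : Fin 3 → ℝ,
              ∑ i, adv (fun y => ω y s) (fun y => b y s) x i * (η s * ψ x * j x s i))
          + (∫ s in (0 : ℝ)..t, ∫ x : Fin 3 → ℝ,
              ∑ i, (2 * ∑ l : Fin 3,
                  cross3 (fun k => pd k (fun z => u z s l) x)
                    (fun k => pd k (fun z => b z s l) x) i)
                * (η s * ψ x * j x s i)) :=
  localized_magnetic_enstrophy_flux_identity_general T hT u b hu_smooth hb_smooth hu_div ω j hω hj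
    heq ψ hψ_smooth hψ_supp η hη_smooth hη_zero hη_one

end
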